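/- For smooth q : ℝ → ℝ define the KdV hierarchy vector fields Z_2[q] := (1/4)q''' + 3 q q' and Z_3[q] := (1/16)q⁽⁵⁾ + (5/2)q' q'' + (5/4)q q''' + (15/2)q² q'. Then Z_2 and Z_3 commute as evolutionary vector fields: for every smooth q : ℝ → ℝ and every x ∈ ℝ, (d/dε)|_{ε=0} Z_3[q + ε Z_2[q]](x) = (d/dε)|_{ε=0} Z_2[q + ε Z_3[q]](x). -/

import Mathlib

section helpers
variable {q g : ℝ → ℝ}

lemma hD (hq : ContDiff ℝ (⊤ : ℕ∞) q) (n : ℕ) (x : ℝ) :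
    HasDerivAt (iteratedDeriv n q) (iteratedDeriv (n+1) q x) x := by
  have h1 : DifferentiableAt ℝ (iteratedDeriv n q) x :=
    (hq.differentiable_iteratedDeriv n
      (by exact_mod_cast lt_top_iff_ne_top.2 (by simp))).differentiableAt
  simpa [iteratedDeriv_succ] using h1.hasDerivAt

lemma cD (hq : ContDiff ℝ (⊤ : ℕ∞) q) (n : ℕ) : ContDiff ℝ (⊤ : ℕ∞) (iteratedDeriv n q) := by
  rw [iteratedDeriv_eq_iterate]
  exact (hq.of_le (by simp)).iterate_deriv n

lemma itd_lin (hq : ContDiff ℝ (⊤ : ℕ∞) q) (hg : ContDiff ℝ (⊤ : ℕ∞) g) (n : ℕ) (c x : ℝ) :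
    iteratedDeriv n (fun y => q y + c * g y) x
      = iteratedDeriv n q x + c * iteratedDeriv n g x := by
  have h1 := iteratedDerivWithin_add (Set.mem_univ x) uniqueDiffOn_univ
    (n := n) (hq.of_le (by exact_mod_cast le_top)).contDiffWithinAt
    (f := q) (g := fun y => c * g y) (((hg.of_le (by exact_mod_cast le_top)).const_smul c).contDiffWithinAt)
  have h2 := iteratedDerivWithin_const_mul (Set.mem_univ x) uniqueDiffOn_univ c
    (n := n) (f := g) (hg.of_le (by exact_mod_cast le_top)).contDiffWithinAt
  simp only [iteratedDerivWithin_univ] at h1 h2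
  rw [h2] at h1; exact h1
end helpers

/-- The second KdV flow `Z₂[q] = (1/4)q''' + 3qq'`. -/
noncomputable def Z2 (q : ℝ → ℝ) (x : ℝ) : ℝ :=
  (1 / 4) * iteratedDeriv 3 q x + 3 * q x * deriv q x

/-- The third KdV flow
`Z₃[q] = (1/16)q⁽⁵⁾ + (5/2)q'q'' + (5/4)qq''' + (15/2)q²q'`. -/
noncomputable def Z3 (q : ℝ → ℝ) (x : ℝ) : ℝ :=
  (1 / 16) * iteratedDeriv 5 q x + (5 / 2) * deriv q x * iteratedDeriv 2 q x
    + (5 / 4) * q x * iteratedDeriv 3 q x + (15 / 2) * q x ^ 2 * deriv q x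

/-- `Z₂` and `Z₃` commute as evolutionary vector fields: for every smooth `q : ℝ → ℝ`
and every `x ∈ ℝ`, the Gateaux derivative of `Z₃` at `q` in the direction `Z₂[q]`
equals the Gateaux derivative of `Z₂` at `q` in the direction `Z₃[q]`. -/
theorem kdv_flows_commute (q : ℝ → ℝ) (hq : ContDiff ℝ (⊤ : ℕ∞) q) (x : ℝ) :
    deriv (fun ε => Z3 (fun y => q y + ε * Z2 q y) x) 0
      = deriv (fun ε => Z2 (fun y => q y + ε * Z3 q y) x) 0 := by
  have hd0 : ∀ y : ℝ, HasDerivAt q (iteratedDeriv 1 q y) y := fun y => by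
    simpa using hD hq 0 y
  have HF1 : ∀ y : ℝ, HasDerivAt (fun y => (1/4) * iteratedDeriv 3 q y + 3 * q y * iteratedDeriv 1 q y)
      ((1/4) * iteratedDeriv 4 q y + 3 * iteratedDeriv 1 q y ^ 2 + 3 * q y * iteratedDeriv 2 q y) y := by
    intro y
    have H := (((hD hq 3 y).const_mul ((1/4) : ℝ)).add (((hd0 y).const_mul (3 : ℝ)).mul (hD hq 1 y)))
    convert H using 1
    · rfl
    · rfl
    · rfl
    simp only [Nat.reduceAdd, Nat.reduceSub, Nat.cast_ofNat, Pi.pow_apply]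
    ring
  have HF2 : ∀ y : ℝ, HasDerivAt (fun y => (1/4) * iteratedDeriv 4 q y + 3 * iteratedDeriv 1 q y ^ 2 + 3 * q y * iteratedDeriv 2 q y)
      ((1/4) * iteratedDeriv 5 q y + 9 * iteratedDeriv 1 q y * iteratedDeriv 2 q y + 3 * q y * iteratedDeriv 3 q y) y := by
    intro y
    have H := ((((hD hq 4 y).const_mul ((1/4) : ℝ)).add (((hD hq 1 y).pow 2).const_mul (3 : ℝ))).add (((hd0 y).const_mul (3 : ℝ)).mul (hD hq 2 y)))
    convert H using 1
    · rfl
    · rfl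
    · rfl
    simp only [Nat.reduceAdd, Nat.reduceSub, Nat.cast_ofNat, Pi.pow_apply]
    ring
  have HF3 : ∀ y : ℝ, HasDerivAt (fun y => (1/4) * iteratedDeriv 5 q y + 9 * iteratedDeriv 1 q y * iteratedDeriv 2 q y + 3 * q y * iteratedDeriv 3 q y)
      ((1/4) * iteratedDeriv 6 q y + 9 * iteratedDeriv 2 q y ^ 2 + 12 * iteratedDeriv 1 q y * iteratedDeriv 3 q y + 3 * q y * iteratedDeriv 4 q y) y := by
    intro y
    have H := ((((hD hq 5 y).const_mul ((1/4) : ℝ)).add (((hD hq 1 y).const_mul (9 : ℝ)).mul (hD hq 2 y))).add (((hd0 y).const_mul (3 : ℝ)).mul (hD hq 3 y)))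
    convert H using 1
    · rfl
    · rfl
    · rfl
    simp only [Nat.reduceAdd, Nat.reduceSub, Nat.cast_ofNat, Pi.pow_apply]
    ring
  have HF4 : ∀ y : ℝ, HasDerivAt (fun y => (1/4) * iteratedDeriv 6 q y + 9 * iteratedDeriv 2 q y ^ 2 + 12 * iteratedDeriv 1 q y * iteratedDeriv 3 q y + 3 * q y * iteratedDeriv 4 q y)
      ((1/4) * iteratedDeriv 7 q y + 30 * iteratedDeriv 2 q y * iteratedDeriv 3 q y + 15 * iteratedDeriv 1 q y * iteratedDeriv 4 q y + 3 * q y * iteratedDeriv 5 q y) y := by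
    intro y
    have H := (((((hD hq 6 y).const_mul ((1/4) : ℝ)).add (((hD hq 2 y).pow 2).const_mul (9 : ℝ))).add (((hD hq 1 y).const_mul (12 : ℝ)).mul (hD hq 3 y))).add (((hd0 y).const_mul (3 : ℝ)).mul (hD hq 4 y)))
    convert H using 1
    · rfl
    · rfl
    · rfl
    simp only [Nat.reduceAdd, Nat.reduceSub, Nat.cast_ofNat, Pi.pow_apply]
    ring
  have HF5 : ∀ y : ℝ, HasDerivAt (fun y => (1/4) * iteratedDeriv 7 q y + 30 * iteratedDeriv 2 q y * iteratedDeriv 3 q y + 15 * iteratedDeriv 1 q y * iteratedDeriv 4 q y + 3 * q y * iteratedDeriv 5 q y)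
      ((1/4) * iteratedDeriv 8 q y + 30 * iteratedDeriv 3 q y ^ 2 + 45 * iteratedDeriv 2 q y * iteratedDeriv 4 q y + 18 * iteratedDeriv 1 q y * iteratedDeriv 5 q y + 3 * q y * iteratedDeriv 6 q y) y := by
    intro y
    have H := (((((hD hq 7 y).const_mul ((1/4) : ℝ)).add (((hD hq 2 y).const_mul (30 : ℝ)).mul (hD hq 3 y))).add (((hD hq 1 y).const_mul (15 : ℝ)).mul (hD hq 4 y))).add (((hd0 y).const_mul (3 : ℝ)).mul (hD hq 5 y)))
    convert H using 1
    · rfl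
    · rfl
    · rfl
    simp only [Nat.reduceAdd, Nat.reduceSub, Nat.cast_ofNat, Pi.pow_apply]
    ring
  have HG1 : ∀ y : ℝ, HasDerivAt (fun y => (1/16) * iteratedDeriv 5 q y + (5/2) * iteratedDeriv 1 q y * iteratedDeriv 2 q y + (5/4) * q y * iteratedDeriv 3 q y + (15/2) * q y ^ 2 * iteratedDeriv 1 q y)
      ((1/16) * iteratedDeriv 6 q y + (5/2) * iteratedDeriv 2 q y ^ 2 + (15/4) * iteratedDeriv 1 q y * iteratedDeriv 3 q y + (5/4) * q y * iteratedDeriv 4 q y + 15 * q y * iteratedDeriv 1 q y ^ 2 + (15/2) * q y ^ 2 * iteratedDeriv 2 q y) y := by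
    intro y
    have H := (((((hD hq 5 y).const_mul ((1/16) : ℝ)).add (((hD hq 1 y).const_mul ((5/2) : ℝ)).mul (hD hq 2 y))).add (((hd0 y).const_mul ((5/4) : ℝ)).mul (hD hq 3 y))).add ((((hd0 y).pow 2).const_mul ((15/2) : ℝ)).mul (hD hq 1 y)))
    convert H using 1
    · rfl
    · rfl
    · rfl
    simp only [Nat.reduceAdd, Nat.reduceSub, Nat.cast_ofNat, Pi.pow_apply]
    ring
  have HG2 : ∀ y : ℝ, HasDerivAt (fun y => (1/16) * iteratedDeriv 6 q y + (5/2) * iteratedDeriv 2 q y ^ 2 + (15/4) * iteratedDeriv 1 q y * iteratedDeriv 3 q y + (5/4) * q y * iteratedDeriv 4 q y + 15 * q y * iteratedDeriv 1 q y ^ 2 + (15/2) * q y ^ 2 * iteratedDeriv 2 q y)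
      ((1/16) * iteratedDeriv 7 q y + (35/4) * iteratedDeriv 2 q y * iteratedDeriv 3 q y + 5 * iteratedDeriv 1 q y * iteratedDeriv 4 q y + (5/4) * q y * iteratedDeriv 5 q y + 15 * iteratedDeriv 1 q y ^ 3 + 45 * q y * iteratedDeriv 1 q y * iteratedDeriv 2 q y + (15/2) * q y ^ 2 * iteratedDeriv 3 q y) y := by
    intro y
    have H := (((((((hD hq 6 y).const_mul ((1/16) : ℝ)).add (((hD hq 2 y).pow 2).const_mul ((5/2) : ℝ))).add (((hD hq 1 y).const_mul ((15/4) : ℝ)).mul (hD hq 3 y))).add (((hd0 y).const_mul ((5/4) : ℝ)).mul (hD hq 4 y))).add (((hd0 y).const_mul (15 : ℝ)).mul ((hD hq 1 y).pow 2))).add ((((hd0 y).pow 2).const_mul ((15/2) : ℝ)).mul (hD hq 2 y)))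
    convert H using 1
    · rfl
    · rfl
    · rfl
    simp only [Nat.reduceAdd, Nat.reduceSub, Nat.cast_ofNat, Pi.pow_apply]
    ring
  have HG3 : ∀ y : ℝ, HasDerivAt (fun y => (1/16) * iteratedDeriv 7 q y + (35/4) * iteratedDeriv 2 q y * iteratedDeriv 3 q y + 5 * iteratedDeriv 1 q y * iteratedDeriv 4 q y + (5/4) * q y * iteratedDeriv 5 q y + 15 * iteratedDeriv 1 q y ^ 3 + 45 * q y * iteratedDeriv 1 q y * iteratedDeriv 2 q y + (15/2) * q y ^ 2 * iteratedDeriv 3 q y)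
      ((1/16) * iteratedDeriv 8 q y + (35/4) * iteratedDeriv 3 q y ^ 2 + (55/4) * iteratedDeriv 2 q y * iteratedDeriv 4 q y + (25/4) * iteratedDeriv 1 q y * iteratedDeriv 5 q y + (5/4) * q y * iteratedDeriv 6 q y + 90 * iteratedDeriv 1 q y ^ 2 * iteratedDeriv 2 q y + 45 * q y * iteratedDeriv 2 q y ^ 2 + 60 * q y * iteratedDeriv 1 q y * iteratedDeriv 3 q y + (15/2) * q y ^ 2 * iteratedDeriv 4 q y) y := by
    intro y
    have H := ((((((((hD hq 7 y).const_mul ((1/16) : ℝ)).add (((hD hq 2 y).const_mul ((35/4) : ℝ)).mul (hD hq 3 y))).add (((hD hq 1 y).const_mul (5 : ℝ)).mul (hD hq 4 y))).add (((hd0 y).const_mul ((5/4) : ℝ)).mul (hD hq 5 y))).add (((hD hq 1 y).pow 3).const_mul (15 : ℝ))).add ((((hd0 y).const_mul (45 : ℝ)).mul (hD hq 1 y)).mul (hD hq 2 y))).add ((((hd0 y).pow 2).const_mul ((15/2) : ℝ)).mul (hD hq 3 y)))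
    convert H using 1
    · rfl
    · rfl
    · rfl
    simp only [Nat.reduceAdd, Nat.reduceSub, Nat.cast_ofNat, Pi.pow_apply, Pi.mul_apply]
    ring
  have e0 : Z2 q = fun y => (1/4) * iteratedDeriv 3 q y + 3 * q y * iteratedDeriv 1 q y := by
    funext y; simp [Z2, iteratedDeriv_one]
  have e0' : Z3 q = fun y => (1/16) * iteratedDeriv 5 q y + (5/2) * iteratedDeriv 1 q y * iteratedDeriv 2 q y + (5/4) * q y * iteratedDeriv 3 q y + (15/2) * q y ^ 2 * iteratedDeriv 1 q y := by
    funext y; simp [Z3, iteratedDeriv_one]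
  have i1 : iteratedDeriv 1 (Z2 q) = fun y => (1/4) * iteratedDeriv 4 q y + 3 * iteratedDeriv 1 q y ^ 2 + 3 * q y * iteratedDeriv 2 q y := by
    rw [iteratedDeriv_one, e0]; exact funext fun y => (HF1 y).deriv
  have i2 : iteratedDeriv 2 (Z2 q) = fun y => (1/4) * iteratedDeriv 5 q y + 9 * iteratedDeriv 1 q y * iteratedDeriv 2 q y + 3 * q y * iteratedDeriv 3 q y := by
    rw [iteratedDeriv_succ, i1]; exact funext fun y => (HF2 y).deriv
  have i3 : iteratedDeriv 3 (Z2 q) = fun y => (1/4) * iteratedDeriv 6 q y + 9 * iteratedDeriv 2 q y ^ 2 + 12 * iteratedDeriv 1 q y * iteratedDeriv 3 q y + 3 * q y * iteratedDeriv 4 q y := by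
    rw [iteratedDeriv_succ, i2]; exact funext fun y => (HF3 y).deriv
  have i4 : iteratedDeriv 4 (Z2 q) = fun y => (1/4) * iteratedDeriv 7 q y + 30 * iteratedDeriv 2 q y * iteratedDeriv 3 q y + 15 * iteratedDeriv 1 q y * iteratedDeriv 4 q y + 3 * q y * iteratedDeriv 5 q y := by
    rw [iteratedDeriv_succ, i3]; exact funext fun y => (HF4 y).deriv
  have i5 : iteratedDeriv 5 (Z2 q) = fun y => (1/4) * iteratedDeriv 8 q y + 30 * iteratedDeriv 3 q y ^ 2 + 45 * iteratedDeriv 2 q y * iteratedDeriv 4 q y + 18 * iteratedDeriv 1 q y * iteratedDeriv 5 q y + 3 * q y * iteratedDeriv 6 q y := by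
    rw [iteratedDeriv_succ, i4]; exact funext fun y => (HF5 y).deriv
  have j1 : iteratedDeriv 1 (Z3 q) = fun y => (1/16) * iteratedDeriv 6 q y + (5/2) * iteratedDeriv 2 q y ^ 2 + (15/4) * iteratedDeriv 1 q y * iteratedDeriv 3 q y + (5/4) * q y * iteratedDeriv 4 q y + 15 * q y * iteratedDeriv 1 q y ^ 2 + (15/2) * q y ^ 2 * iteratedDeriv 2 q y := by
    rw [iteratedDeriv_one, e0']; exact funext fun y => (HG1 y).deriv
  have j2 : iteratedDeriv 2 (Z3 q) = fun y => (1/16) * iteratedDeriv 7 q y + (35/4) * iteratedDeriv 2 q y * iteratedDeriv 3 q y + 5 * iteratedDeriv 1 q y * iteratedDeriv 4 q y + (5/4) * q y * iteratedDeriv 5 q y + 15 * iteratedDeriv 1 q y ^ 3 + 45 * q y * iteratedDeriv 1 q y * iteratedDeriv 2 q y + (15/2) * q y ^ 2 * iteratedDeriv 3 q y := by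
    rw [iteratedDeriv_succ, j1]; exact funext fun y => (HG2 y).deriv
  have j3 : iteratedDeriv 3 (Z3 q) = fun y => (1/16) * iteratedDeriv 8 q y + (35/4) * iteratedDeriv 3 q y ^ 2 + (55/4) * iteratedDeriv 2 q y * iteratedDeriv 4 q y + (25/4) * iteratedDeriv 1 q y * iteratedDeriv 5 q y + (5/4) * q y * iteratedDeriv 6 q y + 90 * iteratedDeriv 1 q y ^ 2 * iteratedDeriv 2 q y + 45 * q y * iteratedDeriv 2 q y ^ 2 + 60 * q y * iteratedDeriv 1 q y * iteratedDeriv 3 q y + (15/2) * q y ^ 2 * iteratedDeriv 4 q y := by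
    rw [iteratedDeriv_succ, j2]; exact funext fun y => (HG3 y).deriv
  have hq' : ContDiff ℝ (⊤ : ℕ∞) q := hq.of_le (by simp)
  have hFsm : ContDiff ℝ (⊤ : ℕ∞) (Z2 q) := by
    rw [e0]
    exact (contDiff_const.mul (cD hq 3)).add
      ((contDiff_const.mul hq').mul (cD hq 1))
  have hGsm : ContDiff ℝ (⊤ : ℕ∞) (Z3 q) := by
    rw [e0']
    exact (((contDiff_const.mul (cD hq 5)).add
      ((contDiff_const.mul (cD hq 1)).mul (cD hq 2))).add
      ((contDiff_const.mul hq').mul (cD hq 3))).add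
      ((contDiff_const.mul (hq'.pow 2)).mul (cD hq 1))
  have aff : ∀ a b : ℝ, HasDerivAt (fun ε : ℝ => a + ε * b) b 0 := fun a b => by
    simpa using ((hasDerivAt_id (0 : ℝ)).mul_const b).const_add a
  have key3 : (fun ε : ℝ => Z3 (fun y => q y + ε * Z2 q y) x) = fun ε : ℝ =>
      (1 / 16) * (iteratedDeriv 5 q x + ε * iteratedDeriv 5 (Z2 q) x)
        + (5 / 2) * (deriv q x + ε * deriv (Z2 q) x)
            * (iteratedDeriv 2 q x + ε * iteratedDeriv 2 (Z2 q) x)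
        + (5 / 4) * (q x + ε * Z2 q x)
            * (iteratedDeriv 3 q x + ε * iteratedDeriv 3 (Z2 q) x)
        + (15 / 2) * (q x + ε * Z2 q x) ^ 2 * (deriv q x + ε * deriv (Z2 q) x) := by
    funext ε
    have hper := fun n => itd_lin hq hFsm n ε x
    have h1 : deriv (fun y => q y + ε * Z2 q y) x = deriv q x + ε * deriv (Z2 q) x := by
      have := hper 1; simpa [iteratedDeriv_one] using this
    simp only [Z3, h1, hper 2, hper 3, hper 5]
  have key2 : (fun ε : ℝ => Z2 (fun y => q y + ε * Z3 q y) x) = fun ε : ℝ =>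
      (1 / 4) * (iteratedDeriv 3 q x + ε * iteratedDeriv 3 (Z3 q) x)
        + 3 * (q x + ε * Z3 q x) * (deriv q x + ε * deriv (Z3 q) x) := by
    funext ε
    have hper := fun n => itd_lin hq hGsm n ε x
    have h1 : deriv (fun y => q y + ε * Z3 q y) x = deriv q x + ε * deriv (Z3 q) x := by
      have := hper 1; simpa [iteratedDeriv_one] using this
    simp only [Z2, h1, hper 3]
  rw [key3, key2]
  have HL := ((((aff (iteratedDeriv 5 q x) (iteratedDeriv 5 (Z2 q) x)).const_mul
      ((1:ℝ)/16)).add (((aff (deriv q x) (deriv (Z2 q) x)).const_mul ((5:ℝ)/2)).mul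
      (aff (iteratedDeriv 2 q x) (iteratedDeriv 2 (Z2 q) x)))).add
      (((aff (q x) (Z2 q x)).const_mul ((5:ℝ)/4)).mul
      (aff (iteratedDeriv 3 q x) (iteratedDeriv 3 (Z2 q) x)))).add
      ((((aff (q x) (Z2 q x)).pow 2).const_mul ((15:ℝ)/2)).mul
      (aff (deriv q x) (deriv (Z2 q) x)))
  have HR := ((aff (iteratedDeriv 3 q x) (iteratedDeriv 3 (Z3 q) x)).const_mul
      ((1:ℝ)/4)).add (((aff (q x) (Z3 q x)).const_mul (3:ℝ)).mul
      (aff (deriv q x) (deriv (Z3 q) x)))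
  erw [HL.deriv, HR.deriv]
  have hd1 : deriv (Z2 q) x = iteratedDeriv 1 (Z2 q) x := by rw [iteratedDeriv_one]
  have hd1' : deriv (Z3 q) x = iteratedDeriv 1 (Z3 q) x := by rw [iteratedDeriv_one]
  have hdq : deriv q x = iteratedDeriv 1 q x := by rw [iteratedDeriv_one]
  simp only [hd1, hd1', i1, i2, i3, i5, j1, j2, j3]
  simp only [e0, e0', hdq, Pi.pow_apply]
  ring
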